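/- arXiv:1811.01091 — 5 statements merged into one kernel-verified Lean document; each statement's English description precedes it below -/
import Mathlib

section
/- Define z(x) = w(x)/M_1, where M_1 = exp((μ²/2) bᵀA(Γ_cond − Γ̂_cond)Aᵀb) · (det(Γ̂_cond) det(Γ_cond^{-1}))^{−1/2}. Then the expectation of z under the approximate conditional Gaussian distribution equals one: ∫_{ℝ^N} z(x) · p_{x̂_cond, Γ̂_cond}(x) dx = 1. -/
open Matrix MeasureTheory Real

/-- Density of the Gaussian distribution `N(m, Γ)` on `ℝ^N`. -/
noncomputable def gaussDensity {N : ℕ} (m : Fin N → ℝ) (Γ : Matrix (Fin N) (Fin N) ℝ)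
    (x : Fin N → ℝ) : ℝ :=
  (2 * π) ^ (-(N : ℝ) / 2) * Γ.det ^ (-(1 : ℝ) / 2) *
    Real.exp (-(1 / 2) * ((x - m) ⬝ᵥ Γ⁻¹.mulVec (x - m)))

/-- Symmetry of a quadratic form for a real symmetric matrix. -/
lemma symm_bilin {n : ℕ} {Q : Matrix (Fin n) (Fin n) ℝ} (hQ : Qᵀ = Q)
    (a c : Fin n → ℝ) : a ⬝ᵥ Q.mulVec c = c ⬝ᵥ Q.mulVec a := by
  rw [Matrix.dotProduct_mulVec, ← Matrix.mulVec_transpose, hQ, dotProduct_comm]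

/-- The standard multivariate Gaussian integral. -/
lemma integral_std_gauss (n : ℕ) :
    ∫ y : Fin n → ℝ, Real.exp (-(1 / 2) * (y ⬝ᵥ y)) = (2 * π) ^ ((n : ℝ) / 2) := by
  have hπ : (0 : ℝ) < 2 * π := by positivity
  have h : ∀ y : Fin n → ℝ,
      Real.exp (-(1 / 2) * (y ⬝ᵥ y)) = ∏ i, Real.exp (-(1 / 2 : ℝ) * (y i) ^ 2) := by
    intro y
    rw [← Real.exp_sum]
    congr 1
    simp only [dotProduct, Finset.mul_sum]
    exact Finset.sum_congr rfl fun i _ => by ring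
  simp_rw [h]
  rw [volume_pi, integral_fintype_prod_eq_pow (ι := Fin n) (fun t : ℝ => Real.exp (-(1 / 2 : ℝ) * t ^ 2))]
  have h1 : ∫ t : ℝ, Real.exp (-(1 / 2 : ℝ) * t ^ 2) = Real.sqrt (2 * π) := by
    rw [integral_gaussian]
    congr 1
    rw [div_div_eq_mul_div, div_one, mul_comm]
  rw [h1, Fintype.card_fin, Real.sqrt_eq_rpow, ← Real.rpow_natCast ((2 * π) ^ (1 / 2 : ℝ)) n,
    ← Real.rpow_mul hπ.le]
  congr 1
  ring

open scoped MatrixOrder in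
/-- The multivariate Gaussian integral for a positive definite quadratic form. -/
lemma integral_gauss_quadratic {n : ℕ} {Q : Matrix (Fin n) (Fin n) ℝ} (hQ : Q.PosDef) :
    ∫ x : Fin n → ℝ, Real.exp (-(1 / 2) * (x ⬝ᵥ Q.mulVec x)) =
      (2 * π) ^ ((n : ℝ) / 2) * Q.det ^ (-(1 : ℝ) / 2) := by
  have hπ : (0 : ℝ) < 2 * π := by positivity
  set S := CFC.sqrt Q with hSdef
  have hSS : S * S = Q := CFC.sqrt_mul_sqrt_self Q hQ.posSemidef.nonneg
  have hSh : Sᵀ = S := by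
    have := (CFC.sqrt_nonneg Q).posSemidef.isHermitian
    exact (Matrix.conjTranspose_eq_transpose_of_trivial _).symm.trans this
  have hdetQ : 0 < Q.det := hQ.det_pos
  have hdetSS : S.det * S.det = Q.det := by rw [← Matrix.det_mul, hSS]
  have hdetS_ne : S.det ≠ 0 := by
    intro h0
    rw [h0, mul_zero] at hdetSS
    exact hdetQ.ne (hdetSS)
  have hdetS_nonneg : 0 ≤ S.det := by
    exact (CFC.sqrt_nonneg Q).posSemidef.det_nonneg
  have hdetS : 0 < S.det := lt_of_le_of_ne hdetS_nonneg (Ne.symm hdetS_ne)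
  have hform : ∀ x : Fin n → ℝ, x ⬝ᵥ Q.mulVec x = (S.mulVec x) ⬝ᵥ (S.mulVec x) := by
    intro x
    rw [← hSS, ← Matrix.mulVec_mulVec, Matrix.dotProduct_mulVec, ← Matrix.mulVec_transpose, hSh]
  simp_rw [hform]
  have hmap := Real.map_matrix_volume_pi_eq_smul_volume_pi (M := S) hdetS_ne
  have hcont : Continuous fun y : Fin n → ℝ => Real.exp (-(1 / 2) * (y ⬝ᵥ y)) := by
    apply Real.continuous_exp.comp
    apply Continuous.mul continuous_const
    unfold dotProduct
    exact continuous_finset_sum _ fun i _ => ((continuous_apply i).mul (continuous_apply i))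
  have hφ : Continuous (⇑(Matrix.toLin' S)) := LinearMap.continuous_of_finiteDimensional _
  have step : ∫ x : Fin n → ℝ, Real.exp (-(1 / 2) * (S.mulVec x ⬝ᵥ S.mulVec x)) =
      (S.det)⁻¹ * ∫ y : Fin n → ℝ, Real.exp (-(1 / 2) * (y ⬝ᵥ y)) := by
    have h1 : ∫ y, Real.exp (-(1 / 2) * (y ⬝ᵥ y)) ∂(Measure.map (⇑(Matrix.toLin' S)) volume) =
        ∫ x : Fin n → ℝ, Real.exp (-(1 / 2) * ((Matrix.toLin' S) x ⬝ᵥ (Matrix.toLin' S) x)) :=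
      integral_map hφ.aemeasurable hcont.aestronglyMeasurable
    simp_rw [Matrix.toLin'_apply] at h1
    rw [← h1, hmap, integral_smul_measure, ENNReal.toReal_ofReal (abs_nonneg _),
      abs_of_pos (inv_pos.mpr hdetS)]
    rfl
  rw [step, integral_std_gauss]
  have hinv : (S.det)⁻¹ = Q.det ^ (-(1 : ℝ) / 2) := by
    rw [show (-(1 : ℝ) / 2) = -(1 / 2 : ℝ) by ring, Real.rpow_neg hdetQ.le,
      ← Real.sqrt_eq_rpow, ← hdetSS, Real.sqrt_mul_self hdetS.le]
  rw [hinv]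
  ring

set_option maxHeartbeats 1000000 in
theorem stmt3 (M N : ℕ) (hM : 0 < M) (hN : 0 < N)
    (μ σ : ℝ) (hμ : 0 < μ) (hσ : 0 < σ)
    (A : Matrix (Fin M) (Fin N) ℝ) (b : Fin M → ℝ)
    (Γprior : Matrix (Fin N) (Fin N) ℝ) (hΓprior : Γprior.PosDef)
    (Γcond : Matrix (Fin N) (Fin N) ℝ) (hΓcond : Γcond.PosDef)
    (hGc : Γcond⁻¹ = μ • (Aᵀ * A) + σ • Γprior⁻¹)
    (Γhat : Matrix (Fin N) (Fin N) ℝ) (hΓhat : Γhat.PosDef)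
    (xhat : Fin N → ℝ) (hxhat : xhat = μ • Γhat.mulVec (Aᵀ.mulVec b))
    (w : (Fin N → ℝ) → ℝ)
    (hw : ∀ x, w x = Real.exp (-(1 / 2) * (x ⬝ᵥ (Γcond⁻¹ - Γhat⁻¹).mulVec x)))
    (M₁ : ℝ)
    (hM₁ : M₁ = Real.exp (μ ^ 2 / 2 * (b ⬝ᵥ (A * (Γcond - Γhat) * Aᵀ).mulVec b)) *
      (Γhat.det * (Γcond⁻¹).det) ^ (-(1 : ℝ) / 2))
    (z : (Fin N → ℝ) → ℝ) (hz : ∀ x, z x = w x / M₁) :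
    ∫ x : Fin N → ℝ, z x * gaussDensity xhat Γhat x = 1 := by
  have hπ : (0 : ℝ) < 2 * π := by positivity
  set u : Fin N → ℝ := Aᵀ.mulVec b with hu
  set xc : Fin N → ℝ := μ • (Γcond.mulVec u) with hxc
  have hQ1 : (Γcond⁻¹).PosDef := hΓcond.inv
  have hQ2 : (Γhat⁻¹).PosDef := hΓhat.inv
  have hT1 : (Γcond⁻¹)ᵀ = Γcond⁻¹ := by
    have := hΓcond.isHermitian.inv
    exact (Matrix.conjTranspose_eq_transpose_of_trivial _).symm.trans this
  have hT2 : (Γhat⁻¹)ᵀ = Γhat⁻¹ := by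
    have := hΓhat.isHermitian.inv
    exact (Matrix.conjTranspose_eq_transpose_of_trivial _).symm.trans this
  have hinv2 : Γhat⁻¹.mulVec xhat = μ • u := by
    rw [hxhat, Matrix.mulVec_smul, Matrix.mulVec_mulVec,
      Matrix.nonsing_inv_mul _ (isUnit_iff_ne_zero.mpr hΓhat.det_pos.ne'), Matrix.one_mulVec]
  have hinv1 : Γcond⁻¹.mulVec xc = μ • u := by
    rw [hxc, Matrix.mulVec_smul, Matrix.mulVec_mulVec,
      Matrix.nonsing_inv_mul _ (isUnit_iff_ne_zero.mpr hΓcond.det_pos.ne'), Matrix.one_mulVec]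
  set C : ℝ := μ ^ 2 / 2 * (b ⬝ᵥ (A * (Γcond - Γhat) * Aᵀ).mulVec b) with hCdef
  have hquad : b ⬝ᵥ (A * (Γcond - Γhat) * Aᵀ).mulVec b =
      u ⬝ᵥ Γcond.mulVec u - u ⬝ᵥ Γhat.mulVec u := by
    rw [← Matrix.mulVec_mulVec, ← Matrix.mulVec_mulVec, ← hu, Matrix.dotProduct_mulVec,
      ← Matrix.mulVec_transpose, ← hu, Matrix.sub_mulVec, dotProduct_sub]
  have hC : C = (1 / 2) * (xc ⬝ᵥ (μ • u)) - (1 / 2) * (xhat ⬝ᵥ (μ • u)) := by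
    rw [hCdef, hquad, hxc, hxhat]
    simp only [smul_dotProduct, dotProduct_smul, smul_eq_mul]
    rw [dotProduct_comm (Γcond.mulVec u) u, dotProduct_comm (Γhat.mulVec u) u]
    ring
  -- the exponent identity
  have hexp : ∀ x : Fin N → ℝ,
      (-(1 / 2) * (x ⬝ᵥ (Γcond⁻¹ - Γhat⁻¹).mulVec x)) +
        (-(1 / 2) * ((x - xhat) ⬝ᵥ (Γhat⁻¹).mulVec (x - xhat))) =
      C + (-(1 / 2) * ((x - xc) ⬝ᵥ (Γcond⁻¹).mulVec (x - xc))) := by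
    intro x
    have e2 : xhat ⬝ᵥ (Γhat⁻¹).mulVec x = x ⬝ᵥ (μ • u) := by
      rw [symm_bilin hT2, hinv2]
    have e2' : x ⬝ᵥ (Γhat⁻¹).mulVec xhat = x ⬝ᵥ (μ • u) := by rw [hinv2]
    have e2'' : xhat ⬝ᵥ (Γhat⁻¹).mulVec xhat = xhat ⬝ᵥ (μ • u) := by rw [hinv2]
    have e1 : xc ⬝ᵥ (Γcond⁻¹).mulVec x = x ⬝ᵥ (μ • u) := by
      rw [symm_bilin hT1, hinv1]
    have e1' : x ⬝ᵥ (Γcond⁻¹).mulVec xc = x ⬝ᵥ (μ • u) := by rw [hinv1]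
    have e1'' : xc ⬝ᵥ (Γcond⁻¹).mulVec xc = xc ⬝ᵥ (μ • u) := by rw [hinv1]
    simp only [Matrix.sub_mulVec, Matrix.mulVec_sub, dotProduct_sub,
      sub_dotProduct]
    rw [e2, e2', e2'', e1, e1', e1'', hC]
    ring
  set k : ℝ := (2 * π) ^ (-(N : ℝ) / 2) * Γhat.det ^ (-(1 : ℝ) / 2) with hk
  have key : ∀ x : Fin N → ℝ, z x * gaussDensity xhat Γhat x =
      (k * Real.exp C / M₁) *
        Real.exp (-(1 / 2) * ((x - xc) ⬝ᵥ (Γcond⁻¹).mulVec (x - xc))) := by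
    intro x
    have expand : Real.exp (-(1 / 2) * (x ⬝ᵥ (Γcond⁻¹ - Γhat⁻¹).mulVec x)) *
        Real.exp (-(1 / 2) * ((x - xhat) ⬝ᵥ (Γhat⁻¹).mulVec (x - xhat))) =
        Real.exp C * Real.exp (-(1 / 2) * ((x - xc) ⬝ᵥ (Γcond⁻¹).mulVec (x - xc))) := by
      rw [← Real.exp_add, ← Real.exp_add, hexp x]
    rw [hz, hw, gaussDensity, ← hk]
    linear_combination (k / M₁) * expand
  simp only [key]
  rw [MeasureTheory.integral_const_mul,
    MeasureTheory.integral_sub_right_eq_self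
      (fun y : Fin N → ℝ => Real.exp (-(1 / 2) * (y ⬝ᵥ (Γcond⁻¹).mulVec y))) xc,
    integral_gauss_quadratic hQ1]
  -- arithmetic
  have hdh : (0 : ℝ) < Γhat.det := hΓhat.det_pos
  have hdc : (0 : ℝ) < (Γcond⁻¹).det := hQ1.det_pos
  have h2 : (2 * π) ^ (-(N : ℝ) / 2) = ((2 * π) ^ ((N : ℝ) / 2))⁻¹ := by
    rw [neg_div, Real.rpow_neg hπ.le]
  have hne1 : (2 * π) ^ ((N : ℝ) / 2) ≠ 0 := (Real.rpow_pos_of_pos hπ _).ne'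
  have hne2 : Γhat.det ^ (-(1 : ℝ) / 2) ≠ 0 := (Real.rpow_pos_of_pos hdh _).ne'
  have hne3 : (Γcond⁻¹).det ^ (-(1 : ℝ) / 2) ≠ 0 := (Real.rpow_pos_of_pos hdc _).ne'
  have hne4 : Real.exp C ≠ 0 := (Real.exp_pos _).ne'
  have hM₁' : M₁ = Real.exp C *
      (Γhat.det ^ (-(1 : ℝ) / 2) * (Γcond⁻¹).det ^ (-(1 : ℝ) / 2)) := by
    rw [hM₁, Real.mul_rpow hdh.le hdc.le]
  rw [hk, hM₁', h2, div_mul_eq_mul_div, div_eq_one_iff_eq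
    (mul_ne_zero hne4 (mul_ne_zero hne2 hne3))]
  field_simp
end

section
/- (Acceptance ratio of Approximate One-Block, Proposition 4.1.) For hyperparameters θ = (μ, σ) and θ' = (μ', σ'), both with positive entries, and any x, x' ∈ ℝ^N and positive reals r, r' (values of the proposal density), the Metropolis–Hastings ratio satisfies [π(x', θ') · p̂_{θ}(x) · r] / [π(x, θ) · p̂_{θ'}(x') · r'] = [z_{θ'}(x') · π_marg(θ') · r] / [z_{θ}(x) · π_marg(θ) · r'], where π(x, θ) = p_{θ}(x) · π_marg(θ) for an arbitrary function π_marg with positive values, p_θ is the exact conditional Gaussian density, p̂_θ the approximate conditional Gaussian density, and z_θ(x) = w_θ(x)/M_1(θ). Consequently min{1, [π(x',θ') p̂_θ(x) r] / [π(x,θ) p̂_{θ'}(x') r']} = min{1, [z_{θ'}(x') π_marg(θ') r] / [z_θ(x) π_marg(θ) r']}. -/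
open Matrix MeasureTheory Real

lemma quad_expand {N : ℕ} (S : Matrix (Fin N) (Fin N) ℝ) (h : S.PosDef)
    (c x : Fin N → ℝ) (μ : ℝ) :
    (x - μ • S.mulVec c) ⬝ᵥ S⁻¹.mulVec (x - μ • S.mulVec c)
      = x ⬝ᵥ S⁻¹.mulVec x - 2 * μ * (c ⬝ᵥ x) + μ ^ 2 * (c ⬝ᵥ S.mulVec c) := by
  have hdet : IsUnit S.det := isUnit_iff_ne_zero.mpr h.det_pos.ne'
  have hinv : S⁻¹.mulVec (S.mulVec c) = c := by
    rw [Matrix.mulVec_mulVec, Matrix.nonsing_inv_mul _ hdet, Matrix.one_mulVec]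
  have hsy : Sᵀ = S := by
    rw [← Matrix.conjTranspose_eq_transpose_of_trivial, h.isHermitian.eq]
  have hsymm : S⁻¹ᵀ = S⁻¹ := by
    rw [Matrix.transpose_nonsing_inv, hsy]
  have h1 : S⁻¹.mulVec (μ • S.mulVec c) = μ • c := by
    rw [Matrix.mulVec_smul, hinv]
  have h2 : ∀ u v : Fin N → ℝ, u ⬝ᵥ S⁻¹.mulVec v = S⁻¹.mulVec u ⬝ᵥ v := by
    intro u v
    rw [Matrix.dotProduct_mulVec, ← Matrix.mulVec_transpose, hsymm]
  rw [Matrix.mulVec_sub, h1, dotProduct_sub, sub_dotProduct, sub_dotProduct]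
  simp only [smul_dotProduct, dotProduct_smul, smul_eq_mul]
  rw [h2 (S.mulVec c) x, hinv, dotProduct_comm c x, dotProduct_comm (S.mulVec c) c]
  ring

lemma real_helper (C u v μ a1 a2 t q1 q2 : ℝ) (hu : 0 < u) (hv : 0 < v) :
    C * u ^ (-(1:ℝ)/2) * Real.exp (-(1/2) * (a1 - 2*μ*t + μ^2*q1))
      = Real.exp (-(1/2) * (a1 - a2)) /
          (Real.exp (μ^2/2 * (q1 - q2)) * (v ^ (-(1:ℝ)/2) * u⁻¹ ^ (-(1:ℝ)/2)))
        * (C * v ^ (-(1:ℝ)/2) * Real.exp (-(1/2) * (a2 - 2*μ*t + μ^2*q2))) := by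
  have hu2 : u ^ (-(1:ℝ)/2) ≠ 0 := ne_of_gt (Real.rpow_pos_of_pos hu _)
  have hv2 : v ^ (-(1:ℝ)/2) ≠ 0 := ne_of_gt (Real.rpow_pos_of_pos hv _)
  have hE : Real.exp (-(1/2) * (a1 - a2))
      = Real.exp (-(1/2) * (a1 - 2*μ*t + μ^2*q1)) * Real.exp (μ^2/2 * (q1 - q2)) /
        Real.exp (-(1/2) * (a2 - 2*μ*t + μ^2*q2)) := by
    rw [← Real.exp_add, ← Real.exp_sub]; congr 1; ring
  rw [hE, Real.inv_rpow hu.le]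
  have he1 := Real.exp_ne_zero (μ^2/2 * (q1 - q2))
  have he2 := Real.exp_ne_zero (-(1/2) * (a2 - 2*μ*t + μ^2*q2))
  field_simp

lemma gaussDensity_pos {N : ℕ} (m : Fin N → ℝ) {Γ : Matrix (Fin N) (Fin N) ℝ}
    (h : Γ.PosDef) (x : Fin N → ℝ) : 0 < gaussDensity m Γ x := by
  have hd := h.det_pos
  have hπ := Real.pi_pos
  unfold gaussDensity
  positivity

lemma gauss_ratio {M N : ℕ} (A : Matrix (Fin M) (Fin N) ℝ) (b : Fin M → ℝ) (μ : ℝ)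
    (Γc Γh : Matrix (Fin N) (Fin N) ℝ) (hc : Γc.PosDef) (hh : Γh.PosDef) (x : Fin N → ℝ) :
    gaussDensity (μ • Γc.mulVec (Aᵀ.mulVec b)) Γc x
      = (Real.exp (-(1 / 2) * (x ⬝ᵥ (Γc⁻¹ - Γh⁻¹).mulVec x)) /
          (Real.exp (μ ^ 2 / 2 * (b ⬝ᵥ (A * (Γc - Γh) * Aᵀ).mulVec b)) *
            (Γh.det * (Γc⁻¹).det) ^ (-(1 : ℝ) / 2)))
        * gaussDensity (μ • Γh.mulVec (Aᵀ.mulVec b)) Γh x := by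
  have hdc := hc.det_pos
  have hdh := hh.det_pos
  have hb : b ⬝ᵥ (A * (Γc - Γh) * Aᵀ).mulVec b
      = (Aᵀ.mulVec b) ⬝ᵥ (Γc - Γh).mulVec (Aᵀ.mulVec b) := by
    rw [← Matrix.mulVec_mulVec, ← Matrix.mulVec_mulVec, Matrix.dotProduct_mulVec b,
      ← Matrix.mulVec_transpose]
  simp only [gaussDensity]
  rw [quad_expand _ hc, quad_expand _ hh, hb,
    Matrix.det_nonsing_inv, Ring.inverse_eq_inv, Matrix.sub_mulVec, Matrix.sub_mulVec, dotProduct_sub,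
    dotProduct_sub, Real.mul_rpow hdh.le (inv_nonneg.mpr hdc.le)]
  exact real_helper _ _ _ μ _ _ _ _ _ hdc hdh

/-- Acceptance ratio of the Approximate One-Block algorithm (Proposition 4.1).
The data indexed by the hyperparameter `θ = (μ, σ)` is given for the current state
(unprimed) and the proposed state (primed). -/
theorem stmt7 (M N : ℕ) (hM : 0 < M) (hN : 0 < N)
    (A : Matrix (Fin M) (Fin N) ℝ) (b : Fin M → ℝ)
    (Γprior : Matrix (Fin N) (Fin N) ℝ) (hΓprior : Γprior.PosDef)
    -- current hyperparameter θ = (μ, σ) and associated quantities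
    (μ σ : ℝ) (hμ : 0 < μ) (hσ : 0 < σ)
    (Γcond : Matrix (Fin N) (Fin N) ℝ) (hΓcond : Γcond.PosDef)
    (hGc : Γcond⁻¹ = μ • (Aᵀ * A) + σ • Γprior⁻¹)
    (xcond : Fin N → ℝ) (hxc : xcond = μ • Γcond.mulVec (Aᵀ.mulVec b))
    (Γhat : Matrix (Fin N) (Fin N) ℝ) (hΓhat : Γhat.PosDef)
    (xhat : Fin N → ℝ) (hxhat : xhat = μ • Γhat.mulVec (Aᵀ.mulVec b))
    (w : (Fin N → ℝ) → ℝ)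
    (hw : ∀ y, w y = Real.exp (-(1 / 2) * (y ⬝ᵥ (Γcond⁻¹ - Γhat⁻¹).mulVec y)))
    (M₁ : ℝ)
    (hM₁ : M₁ = Real.exp (μ ^ 2 / 2 * (b ⬝ᵥ (A * (Γcond - Γhat) * Aᵀ).mulVec b)) *
      (Γhat.det * (Γcond⁻¹).det) ^ (-(1 : ℝ) / 2))
    (z : (Fin N → ℝ) → ℝ) (hz : ∀ y, z y = w y / M₁)
    -- proposed hyperparameter θ' = (μ', σ') and associated quantities
    (μ' σ' : ℝ) (hμ' : 0 < μ') (hσ' : 0 < σ')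
    (Γcond' : Matrix (Fin N) (Fin N) ℝ) (hΓcond' : Γcond'.PosDef)
    (hGc' : Γcond'⁻¹ = μ' • (Aᵀ * A) + σ' • Γprior⁻¹)
    (xcond' : Fin N → ℝ) (hxc' : xcond' = μ' • Γcond'.mulVec (Aᵀ.mulVec b))
    (Γhat' : Matrix (Fin N) (Fin N) ℝ) (hΓhat' : Γhat'.PosDef)
    (xhat' : Fin N → ℝ) (hxhat' : xhat' = μ' • Γhat'.mulVec (Aᵀ.mulVec b))
    (w' : (Fin N → ℝ) → ℝ)
    (hw' : ∀ y, w' y = Real.exp (-(1 / 2) * (y ⬝ᵥ (Γcond'⁻¹ - Γhat'⁻¹).mulVec y)))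
    (M₁' : ℝ)
    (hM₁' : M₁' = Real.exp (μ' ^ 2 / 2 * (b ⬝ᵥ (A * (Γcond' - Γhat') * Aᵀ).mulVec b)) *
      (Γhat'.det * (Γcond'⁻¹).det) ^ (-(1 : ℝ) / 2))
    (z' : (Fin N → ℝ) → ℝ) (hz' : ∀ y, z' y = w' y / M₁')
    -- marginal density values and proposal density values
    (πmarg πmarg' : ℝ) (hπ : 0 < πmarg) (hπ' : 0 < πmarg')
    (r r' : ℝ) (hr : 0 < r) (hr' : 0 < r')
    -- states
    (x x' : Fin N → ℝ) :
    (gaussDensity xcond' Γcond' x' * πmarg' * gaussDensity xhat Γhat x * r) /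
        (gaussDensity xcond Γcond x * πmarg * gaussDensity xhat' Γhat' x' * r')
      = (z' x' * πmarg' * r) / (z x * πmarg * r') ∧
    min 1 ((gaussDensity xcond' Γcond' x' * πmarg' * gaussDensity xhat Γhat x * r) /
        (gaussDensity xcond Γcond x * πmarg * gaussDensity xhat' Γhat' x' * r'))
      = min 1 ((z' x' * πmarg' * r) / (z x * πmarg * r')) := by
  have kc : gaussDensity xcond Γcond x = z x * gaussDensity xhat Γhat x := by
    rw [hz, hw, hM₁, hxc, hxhat]
    exact gauss_ratio A b μ Γcond Γhat hΓcond hΓhat x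
  have kc' : gaussDensity xcond' Γcond' x' = z' x' * gaussDensity xhat' Γhat' x' := by
    rw [hz', hw', hM₁', hxc', hxhat']
    exact gauss_ratio A b μ' Γcond' Γhat' hΓcond' hΓhat' x'
  have hGh : 0 < gaussDensity xhat Γhat x := gaussDensity_pos _ hΓhat _
  have hGh' : 0 < gaussDensity xhat' Γhat' x' := gaussDensity_pos _ hΓhat' _
  have hzx : 0 < z x := by
    rw [hz, hw, hM₁]
    have := hΓcond.inv.det_pos
    have := hΓhat.det_pos
    positivity
  have hzx' : 0 < z' x' := by
    rw [hz', hw', hM₁']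
    have := hΓcond'.inv.det_pos
    have := hΓhat'.det_pos
    positivity
  have main : (gaussDensity xcond' Γcond' x' * πmarg' * gaussDensity xhat Γhat x * r) /
        (gaussDensity xcond Γcond x * πmarg * gaussDensity xhat' Γhat' x' * r')
      = (z' x' * πmarg' * r) / (z x * πmarg * r') := by
    rw [kc, kc', div_eq_div_iff (by positivity) (by positivity)]
    ring
  exact ⟨main, by rw [main]⟩
end

section
/- (Second-stage acceptance ratio of delayed acceptance, Proposition 4.2.) For hyperparameters θ = (μ, σ) and θ' = (μ', σ') with positive entries, any x, x' ∈ ℝ^N, and any function g with positive values, define the unnormalized exact joint density π(x, θ) = g(θ) exp(−(μ/2)‖Ax − b‖² − (σ/2) xᵀΓ_prior^{-1}x) and the unnormalized approximate joint density π̂(x, θ) = g(θ) exp(−(μ/2) bᵀb + (μ²/2) bᵀA Γ̂_cond(θ) Aᵀb − (1/2)(x − x̂_cond(θ))ᵀ Γ̂_cond(θ)^{-1}(x − x̂_cond(θ))). Then [π(x', θ') π̂(x, θ)] / [π(x, θ) π̂(x', θ')] = w_{θ'}(x') / w_{θ}(x), and hence the second-stage acceptance probability equals min{1, w_{θ'}(x')/w_{θ}(x)}.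 -/
open Matrix MeasureTheory Real

private lemma keylem {M N : ℕ} (A : Matrix (Fin M) (Fin N) ℝ) (b : Fin M → ℝ)
    (Γp Γc Γh : Matrix (Fin N) (Fin N) ℝ) (μ σ : ℝ)
    (hΓh : Γh.PosDef)
    (hGc : Γc⁻¹ = μ • (Aᵀ * A) + σ • Γp⁻¹)
    (xh : Fin N → ℝ) (hxh : xh = μ • Γh.mulVec (Aᵀ.mulVec b)) (y : Fin N → ℝ) :
    -(μ / 2) * ((A.mulVec y - b) ⬝ᵥ (A.mulVec y - b)) - (σ / 2) * (y ⬝ᵥ Γp⁻¹.mulVec y)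
    = (-(μ / 2) * (b ⬝ᵥ b) + μ ^ 2 / 2 * (b ⬝ᵥ (A * Γh * Aᵀ).mulVec b)
        - (1 / 2) * ((y - xh) ⬝ᵥ Γh⁻¹.mulVec (y - xh)))
      + (-(1 / 2) * (y ⬝ᵥ (Γc⁻¹ - Γh⁻¹).mulVec y)) := by
  set v : Fin N → ℝ := Aᵀ.mulVec b with hv
  have hinvmul : Γh⁻¹ * Γh = 1 :=
    Matrix.nonsing_inv_mul Γh (isUnit_iff_ne_zero.2 (ne_of_gt hΓh.det_pos))
  have hsymm : Γh⁻¹ᵀ = Γh⁻¹ := by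
    rw [Matrix.transpose_nonsing_inv]
    congr 1
    exact (by simpa using hΓh.1 : Γh.IsSymm)
  have h1 : Γh⁻¹.mulVec xh = μ • v := by
    rw [hxh, Matrix.mulVec_smul, Matrix.mulVec_mulVec, hinvmul, Matrix.one_mulVec]
  have hdotA : ∀ (z : Fin M → ℝ) (u : Fin N → ℝ),
      z ⬝ᵥ A.mulVec u = (Aᵀ.mulVec z) ⬝ᵥ u := by
    intro z u
    rw [Matrix.dotProduct_mulVec, Matrix.mulVec_transpose]
  have hq : (A.mulVec y) ⬝ᵥ (A.mulVec y) = y ⬝ᵥ (Aᵀ * A).mulVec y := by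
    rw [dotProduct_comm (A.mulVec y), hdotA, Matrix.mulVec_mulVec,
      dotProduct_comm]
  have hs : b ⬝ᵥ (A.mulVec y) = v ⬝ᵥ y := hdotA b y
  have hs2 : (A.mulVec y) ⬝ᵥ b = v ⬝ᵥ y := by rw [dotProduct_comm]; exact hs
  have e1 : (A.mulVec y - b) ⬝ᵥ (A.mulVec y - b)
      = y ⬝ᵥ (Aᵀ * A).mulVec y - 2 * (v ⬝ᵥ y) + b ⬝ᵥ b := by
    rw [sub_dotProduct, dotProduct_sub, dotProduct_sub, hq, hs, hs2]
    ring
  -- cross terms of the approximate quadratic form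
  have hc1 : y ⬝ᵥ Γh⁻¹.mulVec xh = μ * (v ⬝ᵥ y) := by
    rw [h1, dotProduct_smul, dotProduct_comm]
    simp [smul_eq_mul]
  have hc2 : xh ⬝ᵥ Γh⁻¹.mulVec y = μ * (v ⬝ᵥ y) := by
    rw [Matrix.dotProduct_mulVec, ← Matrix.mulVec_transpose, hsymm, h1,
      smul_dotProduct]
    simp [smul_eq_mul]
  have hc3 : xh ⬝ᵥ Γh⁻¹.mulVec xh = μ ^ 2 * ((Γh.mulVec v) ⬝ᵥ v) := by
    rw [h1, dotProduct_smul, hxh]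
    rw [smul_dotProduct]
    simp [smul_eq_mul]
    ring
  have e2 : (y - xh) ⬝ᵥ Γh⁻¹.mulVec (y - xh)
      = y ⬝ᵥ Γh⁻¹.mulVec y - 2 * μ * (v ⬝ᵥ y) + μ ^ 2 * ((Γh.mulVec v) ⬝ᵥ v) := by
    rw [Matrix.mulVec_sub, sub_dotProduct, dotProduct_sub, dotProduct_sub,
      hc1, hc2, hc3]
    ring
  have e3 : y ⬝ᵥ (Γc⁻¹ - Γh⁻¹).mulVec y
      = μ * (y ⬝ᵥ (Aᵀ * A).mulVec y) + σ * (y ⬝ᵥ Γp⁻¹.mulVec y) - y ⬝ᵥ Γh⁻¹.mulVec y := by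
    rw [Matrix.sub_mulVec, dotProduct_sub, hGc, Matrix.add_mulVec,
      dotProduct_add, Matrix.smul_mulVec, Matrix.smul_mulVec,
      dotProduct_smul, dotProduct_smul]
    simp [smul_eq_mul]
  have e4 : b ⬝ᵥ (A * Γh * Aᵀ).mulVec b = (Γh.mulVec v) ⬝ᵥ v := by
    rw [Matrix.mul_assoc, ← Matrix.mulVec_mulVec, hdotA,
      ← Matrix.mulVec_mulVec, dotProduct_comm]
  linear_combination (-(μ/2)) * e1 + (1/2) * e2 + (1/2) * e3 - (μ^2/2) * e4


/-- Second-stage acceptance ratio of delayed acceptance (Proposition 4.2). -/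
theorem stmt8 (M N : ℕ) (hM : 0 < M) (hN : 0 < N)
    (A : Matrix (Fin M) (Fin N) ℝ) (b : Fin M → ℝ)
    (Γprior : Matrix (Fin N) (Fin N) ℝ) (hΓprior : Γprior.PosDef)
    -- an arbitrary positive function g of the hyperparameter θ = (μ, σ)
    (g : ℝ → ℝ → ℝ) (hg : ∀ μ σ, 0 < g μ σ)
    -- current hyperparameter θ = (μ, σ) and associated quantities
    (μ σ : ℝ) (hμ : 0 < μ) (hσ : 0 < σ)
    (Γcond : Matrix (Fin N) (Fin N) ℝ) (hΓcond : Γcond.PosDef)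
    (hGc : Γcond⁻¹ = μ • (Aᵀ * A) + σ • Γprior⁻¹)
    (Γhat : Matrix (Fin N) (Fin N) ℝ) (hΓhat : Γhat.PosDef)
    (xhat : Fin N → ℝ) (hxhat : xhat = μ • Γhat.mulVec (Aᵀ.mulVec b))
    (w : (Fin N → ℝ) → ℝ)
    (hw : ∀ y, w y = Real.exp (-(1 / 2) * (y ⬝ᵥ (Γcond⁻¹ - Γhat⁻¹).mulVec y)))
    -- proposed hyperparameter θ' = (μ', σ') and associated quantities
    (μ' σ' : ℝ) (hμ' : 0 < μ') (hσ' : 0 < σ')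
    (Γcond' : Matrix (Fin N) (Fin N) ℝ) (hΓcond' : Γcond'.PosDef)
    (hGc' : Γcond'⁻¹ = μ' • (Aᵀ * A) + σ' • Γprior⁻¹)
    (Γhat' : Matrix (Fin N) (Fin N) ℝ) (hΓhat' : Γhat'.PosDef)
    (xhat' : Fin N → ℝ) (hxhat' : xhat' = μ' • Γhat'.mulVec (Aᵀ.mulVec b))
    (w' : (Fin N → ℝ) → ℝ)
    (hw' : ∀ y, w' y = Real.exp (-(1 / 2) * (y ⬝ᵥ (Γcond'⁻¹ - Γhat'⁻¹).mulVec y)))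
    -- exact and approximate unnormalized joint posterior densities
    (pexact pexact' phat phat' : (Fin N → ℝ) → ℝ)
    (hpexact : ∀ y, pexact y = g μ σ *
      Real.exp (-(μ / 2) * ((A.mulVec y - b) ⬝ᵥ (A.mulVec y - b))
        - (σ / 2) * (y ⬝ᵥ Γprior⁻¹.mulVec y)))
    (hpexact' : ∀ y, pexact' y = g μ' σ' *
      Real.exp (-(μ' / 2) * ((A.mulVec y - b) ⬝ᵥ (A.mulVec y - b))
        - (σ' / 2) * (y ⬝ᵥ Γprior⁻¹.mulVec y)))
    (hphat : ∀ y, phat y = g μ σ *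
      Real.exp (-(μ / 2) * (b ⬝ᵥ b) + μ ^ 2 / 2 * (b ⬝ᵥ (A * Γhat * Aᵀ).mulVec b)
        - (1 / 2) * ((y - xhat) ⬝ᵥ (Γhat⁻¹).mulVec (y - xhat))))
    (hphat' : ∀ y, phat' y = g μ' σ' *
      Real.exp (-(μ' / 2) * (b ⬝ᵥ b) + μ' ^ 2 / 2 * (b ⬝ᵥ (A * Γhat' * Aᵀ).mulVec b)
        - (1 / 2) * ((y - xhat') ⬝ᵥ (Γhat'⁻¹).mulVec (y - xhat'))))
    -- states
    (x x' : Fin N → ℝ) :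
    (pexact' x' * phat x) / (pexact x * phat' x') = w' x' / w x ∧
    min 1 ((pexact' x' * phat x) / (pexact x * phat' x'))
      = min 1 (w' x' / w x) := by
  have hfac : ∀ y, pexact y = phat y * w y := by
    intro y
    rw [hpexact y, hphat y, hw y, mul_assoc, ← Real.exp_add,
      keylem A b Γprior Γcond Γhat μ σ hΓhat hGc xhat hxhat y]
  have hfac' : ∀ y, pexact' y = phat' y * w' y := by
    intro y
    rw [hpexact' y, hphat' y, hw' y, mul_assoc, ← Real.exp_add,
      keylem A b Γprior Γcond' Γhat' μ' σ' hΓhat' hGc' xhat' hxhat' y]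
  have hpx : phat x ≠ 0 := by
    rw [hphat x]; exact (mul_pos (hg μ σ) (Real.exp_pos _)).ne'
  have hpx' : phat' x' ≠ 0 := by
    rw [hphat' x']; exact (mul_pos (hg μ' σ') (Real.exp_pos _)).ne'
  have hwx : w x ≠ 0 := by
    rw [hw x]; exact (Real.exp_pos _).ne'
  have hmain : (pexact' x' * phat x) / (pexact x * phat' x') = w' x' / w x := by
    rw [hfac' x', hfac x]
    field_simp
  exact ⟨hmain, by rw [hmain]⟩
end

section
/- (Acceptance ratio of Pseudo-Marginal MCMC, Proposition 4.3.) Fix a positive integer K. For a hyperparameter θ = (μ, σ) with positive entries and points x_1, …, x_K ∈ ℝ^N, define the importance-sampling estimator π^K(θ) = (1/K) Σ_{j=1}^K [p_θ(x_j) π_marg(θ)] / p̂_θ(x_j), where π_marg is an arbitrary function with positive values, p_θ is the exact conditional Gaussian density and p̂_θ the approximate conditional Gaussian density. Then π^K(θ) = z_K(θ) · π_marg(θ), where z_K(θ) = (1/K) Σ_{j=1}^K w_θ(x_j)/M_1(θ). Consequently, for θ, θ' with positive entries, samples x_1,…,x_K and x'_1,…,x'_K, and positive reals r, r', [π^K(θ')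 r] / [π^K(θ) r'] = [z_K(θ') π_marg(θ') r] / [z_K(θ) π_marg(θ) r'], where z_K(θ') is computed from the x'_j. -/
open Matrix MeasureTheory Real

lemma inv_mulVec_mean {N : ℕ} (S : Matrix (Fin N) (Fin N) ℝ) (hS : S.PosDef)
    (μ : ℝ) (v : Fin N → ℝ) :
    S⁻¹.mulVec (μ • S.mulVec v) = μ • v := by
  rw [Matrix.mulVec_smul, Matrix.mulVec_mulVec,
    Matrix.nonsing_inv_mul _ (isUnit_iff_ne_zero.mpr hS.det_pos.ne'),
    Matrix.one_mulVec]

lemma expand_quad {N : ℕ} (S : Matrix (Fin N) (Fin N) ℝ) (hS : S.PosDef)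
    (μ : ℝ) (v y : Fin N → ℝ) :
    (y - μ • S.mulVec v) ⬝ᵥ S⁻¹.mulVec (y - μ • S.mulVec v)
      = y ⬝ᵥ S⁻¹.mulVec y - 2 * μ * (y ⬝ᵥ v) + μ ^ 2 * (v ⬝ᵥ S.mulVec v) := by
  have hS' : Sᵀ = S := by simpa using hS.isHermitian.eq
  have hsymm : S⁻¹ᵀ = S⁻¹ := by rw [Matrix.transpose_nonsing_inv, hS']
  have h1 : S⁻¹.mulVec (μ • S.mulVec v) = μ • v := inv_mulVec_mean S hS μ v
  have h2 : (μ • S.mulVec v) ⬝ᵥ S⁻¹.mulVec y = μ * (y ⬝ᵥ v) := by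
    rw [Matrix.dotProduct_mulVec, ← Matrix.mulVec_transpose, hsymm, h1,
      smul_dotProduct, dotProduct_comm]
    simp [smul_eq_mul]
  rw [Matrix.mulVec_sub, sub_dotProduct, dotProduct_sub,
    dotProduct_sub, h1, h2]
  have h3 : S.mulVec v ⬝ᵥ v = v ⬝ᵥ S.mulVec v := dotProduct_comm _ _
  simp only [dotProduct_smul, smul_dotProduct, smul_eq_mul, h3]
  ring

lemma gd_ratio {M N : ℕ} (A : Matrix (Fin M) (Fin N) ℝ) (b : Fin M → ℝ) (μ : ℝ)
    (Γc Γh : Matrix (Fin N) (Fin N) ℝ) (hc : Γc.PosDef) (hh : Γh.PosDef)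
    (y : Fin N → ℝ) :
    gaussDensity (μ • Γc.mulVec (Aᵀ.mulVec b)) Γc y /
      gaussDensity (μ • Γh.mulVec (Aᵀ.mulVec b)) Γh y
    = Real.exp (-(1 / 2) * (y ⬝ᵥ (Γc⁻¹ - Γh⁻¹).mulVec y)) /
      (Real.exp (μ ^ 2 / 2 * (b ⬝ᵥ (A * (Γc - Γh) * Aᵀ).mulVec b)) *
        (Γh.det * (Γc⁻¹).det) ^ (-(1 : ℝ) / 2)) := by
  set v : Fin N → ℝ := Aᵀ.mulVec b with hv
  -- quadratic form identity for b
  have hB : b ⬝ᵥ (A * (Γc - Γh) * Aᵀ).mulVec b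
      = v ⬝ᵥ Γc.mulVec v - v ⬝ᵥ Γh.mulVec v := by
    rw [← Matrix.mulVec_mulVec, ← Matrix.mulVec_mulVec, Matrix.dotProduct_mulVec,
      ← Matrix.mulVec_transpose, ← hv, Matrix.sub_mulVec, dotProduct_sub]
  have hΔ : y ⬝ᵥ (Γc⁻¹ - Γh⁻¹).mulVec y
      = y ⬝ᵥ Γc⁻¹.mulVec y - y ⬝ᵥ Γh⁻¹.mulVec y := by
    rw [Matrix.sub_mulVec, dotProduct_sub]
  -- exp part
  have hexp : Real.exp (-(1 / 2) * ((y - μ • Γc.mulVec v) ⬝ᵥ Γc⁻¹.mulVec (y - μ • Γc.mulVec v)))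
      * Real.exp (μ ^ 2 / 2 * (b ⬝ᵥ (A * (Γc - Γh) * Aᵀ).mulVec b))
      = Real.exp (-(1 / 2) * (y ⬝ᵥ (Γc⁻¹ - Γh⁻¹).mulVec y))
      * Real.exp (-(1 / 2) * ((y - μ • Γh.mulVec v) ⬝ᵥ Γh⁻¹.mulVec (y - μ • Γh.mulVec v))) := by
    rw [← Real.exp_add, ← Real.exp_add]
    congr 1
    rw [expand_quad Γc hc, expand_quad Γh hh, hB, hΔ]
    ring
  -- det part
  have hdcpos := hc.det_pos
  have hdhpos := hh.det_pos
  have hdet : Γc.det ^ (-(1 : ℝ) / 2)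
      = Γh.det ^ (-(1 : ℝ) / 2) / (Γh.det * (Γc⁻¹).det) ^ (-(1 : ℝ) / 2) := by
    rw [Matrix.det_nonsing_inv, Ring.inverse_eq_inv,
      Real.mul_rpow hdhpos.le (inv_nonneg.mpr hdcpos.le),
      Real.inv_rpow hdcpos.le]
    have h1 : Γh.det ^ (-(1 : ℝ) / 2) ≠ 0 := (Real.rpow_pos_of_pos hdhpos _).ne'
    have h2 : Γc.det ^ (-(1 : ℝ) / 2) ≠ 0 := (Real.rpow_pos_of_pos hdcpos _).ne'
    field_simp
  have hCpos : (0:ℝ) < (2 * π) ^ (-(N : ℝ) / 2) :=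
    Real.rpow_pos_of_pos (by positivity) _
  have hehpos : (0:ℝ) < Real.exp (-(1 / 2) * ((y - μ • Γh.mulVec v) ⬝ᵥ Γh⁻¹.mulVec (y - μ • Γh.mulVec v))) := Real.exp_pos _
  have hD2pos : (0:ℝ) < (Γh.det * (Γc⁻¹).det) ^ (-(1 : ℝ) / 2) := by
    apply Real.rpow_pos_of_pos
    rw [Matrix.det_nonsing_inv, Ring.inverse_eq_inv]
    positivity
  have hdhr : (0:ℝ) < Γh.det ^ (-(1 : ℝ) / 2) := Real.rpow_pos_of_pos hdhpos _
  unfold gaussDensity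
  rw [hdet, div_eq_div_iff (by positivity) (by positivity)]
  have hstep : (2 * π) ^ (-(N : ℝ) / 2) *
      (Γh.det ^ (-(1 : ℝ) / 2) / (Γh.det * (Γc⁻¹).det) ^ (-(1 : ℝ) / 2)) *
      Real.exp (-(1 / 2) * ((y - μ • Γc.mulVec v) ⬝ᵥ Γc⁻¹.mulVec (y - μ • Γc.mulVec v))) *
      (Real.exp (μ ^ 2 / 2 * (b ⬝ᵥ (A * (Γc - Γh) * Aᵀ).mulVec b)) *
        (Γh.det * (Γc⁻¹).det) ^ (-(1 : ℝ) / 2))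
      = ((2 * π) ^ (-(N : ℝ) / 2) * Γh.det ^ (-(1 : ℝ) / 2)) *
        (Real.exp (-(1 / 2) * ((y - μ • Γc.mulVec v) ⬝ᵥ Γc⁻¹.mulVec (y - μ • Γc.mulVec v))) *
          Real.exp (μ ^ 2 / 2 * (b ⬝ᵥ (A * (Γc - Γh) * Aᵀ).mulVec b))) *
        (((Γh.det * (Γc⁻¹).det) ^ (-(1 : ℝ) / 2))⁻¹ * (Γh.det * (Γc⁻¹).det) ^ (-(1 : ℝ) / 2)) := by
    ring
  rw [hstep, inv_mul_cancel₀ hD2pos.ne', mul_one, hexp]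
  ring

/-- Acceptance ratio of Pseudo-Marginal MCMC (Proposition 4.3). -/
theorem stmt9 (M N : ℕ) (hM : 0 < M) (hN : 0 < N) (K : ℕ) (hK : 0 < K)
    (A : Matrix (Fin M) (Fin N) ℝ) (b : Fin M → ℝ)
    (Γprior : Matrix (Fin N) (Fin N) ℝ) (hΓprior : Γprior.PosDef)
    -- hyperparameter θ = (μ, σ) and associated quantities
    (μ σ : ℝ) (hμ : 0 < μ) (hσ : 0 < σ)
    (Γcond : Matrix (Fin N) (Fin N) ℝ) (hΓcond : Γcond.PosDef)
    (hGc : Γcond⁻¹ = μ • (Aᵀ * A) + σ • Γprior⁻¹)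
    (xcond : Fin N → ℝ) (hxc : xcond = μ • Γcond.mulVec (Aᵀ.mulVec b))
    (Γhat : Matrix (Fin N) (Fin N) ℝ) (hΓhat : Γhat.PosDef)
    (xhat : Fin N → ℝ) (hxhat : xhat = μ • Γhat.mulVec (Aᵀ.mulVec b))
    (w : (Fin N → ℝ) → ℝ)
    (hw : ∀ y, w y = Real.exp (-(1 / 2) * (y ⬝ᵥ (Γcond⁻¹ - Γhat⁻¹).mulVec y)))
    (M₁ : ℝ)
    (hM₁ : M₁ = Real.exp (μ ^ 2 / 2 * (b ⬝ᵥ (A * (Γcond - Γhat) * Aᵀ).mulVec b)) *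
      (Γhat.det * (Γcond⁻¹).det) ^ (-(1 : ℝ) / 2))
    -- hyperparameter θ' = (μ', σ') and associated quantities
    (μ' σ' : ℝ) (hμ' : 0 < μ') (hσ' : 0 < σ')
    (Γcond' : Matrix (Fin N) (Fin N) ℝ) (hΓcond' : Γcond'.PosDef)
    (hGc' : Γcond'⁻¹ = μ' • (Aᵀ * A) + σ' • Γprior⁻¹)
    (xcond' : Fin N → ℝ) (hxc' : xcond' = μ' • Γcond'.mulVec (Aᵀ.mulVec b))
    (Γhat' : Matrix (Fin N) (Fin N) ℝ) (hΓhat' : Γhat'.PosDef)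
    (xhat' : Fin N → ℝ) (hxhat' : xhat' = μ' • Γhat'.mulVec (Aᵀ.mulVec b))
    (w' : (Fin N → ℝ) → ℝ)
    (hw' : ∀ y, w' y = Real.exp (-(1 / 2) * (y ⬝ᵥ (Γcond'⁻¹ - Γhat'⁻¹).mulVec y)))
    (M₁' : ℝ)
    (hM₁' : M₁' = Real.exp (μ' ^ 2 / 2 * (b ⬝ᵥ (A * (Γcond' - Γhat') * Aᵀ).mulVec b)) *
      (Γhat'.det * (Γcond'⁻¹).det) ^ (-(1 : ℝ) / 2))
    -- marginal density values and proposal density values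
    (πmarg πmarg' : ℝ) (hπ : 0 < πmarg) (hπ' : 0 < πmarg')
    (r r' : ℝ) (hr : 0 < r) (hr' : 0 < r')
    -- importance samples
    (x x' : Fin K → (Fin N → ℝ))
    -- importance-sampling estimators and averaged weights
    (πK πK' zK zK' : ℝ)
    (hπK : πK = (1 / (K : ℝ)) *
      ∑ j, gaussDensity xcond Γcond (x j) * πmarg / gaussDensity xhat Γhat (x j))
    (hπK' : πK' = (1 / (K : ℝ)) *
      ∑ j, gaussDensity xcond' Γcond' (x' j) * πmarg' / gaussDensity xhat' Γhat' (x' j))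
    (hzK : zK = (1 / (K : ℝ)) * ∑ j, w (x j) / M₁)
    (hzK' : zK' = (1 / (K : ℝ)) * ∑ j, w' (x' j) / M₁') :
    πK = zK * πmarg ∧ πK' = zK' * πmarg' ∧
    (πK' * r) / (πK * r') = (zK' * πmarg' * r) / (zK * πmarg * r') := by
  have h1 : πK = zK * πmarg := by
    have hterm : ∀ y, gaussDensity xcond Γcond y * πmarg / gaussDensity xhat Γhat y
        = w y / M₁ * πmarg := by
      intro y
      rw [mul_div_right_comm, hxc, hxhat,
        gd_ratio A b μ Γcond Γhat hΓcond hΓhat y, hw, hM₁]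
    rw [hπK, hzK]
    simp_rw [hterm]
    rw [← Finset.sum_mul]
    ring
  have h2 : πK' = zK' * πmarg' := by
    have hterm : ∀ y, gaussDensity xcond' Γcond' y * πmarg' / gaussDensity xhat' Γhat' y
        = w' y / M₁' * πmarg' := by
      intro y
      rw [mul_div_right_comm, hxc', hxhat',
        gd_ratio A b μ' Γcond' Γhat' hΓcond' hΓhat' y, hw', hM₁']
    rw [hπK', hzK']
    simp_rw [hterm]
    rw [← Finset.sum_mul]
    ring
  exact ⟨h1, h2, by rw [h1, h2]⟩
end

section
/- (Square-root factorization of the approximate conditional covariance.) Let L ∈ ℝ^{N×N} be invertible, let V ∈ ℝ^{N×k} have orthonormal columns, let λ_1, …, λ_k ≥ 0, and let μ, σ > 0. Define Γ̂_cond = [Lᵀ(μ V Λ Vᵀ + σ I_N)L]^{-1} with Λ = diag(λ_1, …, λ_k), define D = diag(μλ_1/(μλ_1 + σ), …, μλ_k/(μλ_k + σ)), D̂ = I_k − (I_k − D)^{1/2} (entrywise square root on the diagonal), and G = σ^{−1/2} L^{−1}(I_N − V D̂ Vᵀ). Then G Gᵀ = Γ̂_cond. -/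
open Matrix Real

/-- Square-root factorization of the approximate conditional covariance: `G Gᵀ = Γ̂_cond`. -/
theorem stmt17 (N k : ℕ)
    (L : Matrix (Fin N) (Fin N) ℝ) (hL : IsUnit L.det)
    (V : Matrix (Fin N) (Fin k) ℝ) (hV : Vᵀ * V = 1)
    (lam : Fin k → ℝ) (hlam : ∀ j, 0 ≤ lam j)
    (μ σ : ℝ) (hμ : 0 < μ) (hσ : 0 < σ)
    (Γhat : Matrix (Fin N) (Fin N) ℝ)
    (hΓhat : Γhat = (Lᵀ * (μ • (V * Matrix.diagonal lam * Vᵀ)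
      + σ • (1 : Matrix (Fin N) (Fin N) ℝ)) * L)⁻¹)
    (D Dhat : Matrix (Fin k) (Fin k) ℝ)
    (hD : D = Matrix.diagonal (fun j => μ * lam j / (μ * lam j + σ)))
    (hDhat : Dhat = Matrix.diagonal
      (fun j => 1 - Real.sqrt (1 - μ * lam j / (μ * lam j + σ))))
    (G : Matrix (Fin N) (Fin N) ℝ)
    (hG : G = (σ ^ (-(1 : ℝ) / 2) : ℝ) •
      (L⁻¹ * ((1 : Matrix (Fin N) (Fin N) ℝ) - V * Dhat * Vᵀ))) :
    G * Gᵀ = Γhat := by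
  have hσne : σ ≠ 0 := ne_of_gt hσ
  have hden : ∀ j, 0 < μ * lam j + σ := fun j =>
    add_pos_of_nonneg_of_pos (mul_nonneg hμ.le (hlam j)) hσ
  -- diagonal identity: Dhat + Dhat - Dhat * Dhat = D
  have hd1 : Dhat + Dhat - Dhat * Dhat = D := by
    subst hD hDhat
    rw [Matrix.diagonal_mul_diagonal]
    ext i j
    rcases eq_or_ne i j with rfl | h
    swap
    · simp [Matrix.diagonal_apply_ne _ h, h]
    simp only [Matrix.sub_apply, Matrix.add_apply, Matrix.diagonal_apply_eq]
    set j := i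
    have h1 : (0:ℝ) ≤ 1 - μ * lam j / (μ * lam j + σ) := by
      rw [sub_nonneg]
      apply div_le_one_of_le₀
      · linarith [hσ.le]
      · exact (hden j).le
    have h2 : Real.sqrt (1 - μ * lam j / (μ * lam j + σ)) ^ 2
        = 1 - μ * lam j / (μ * lam j + σ) := Real.sq_sqrt h1
    nlinarith [h2]
  -- diagonal identity used for key2
  have hd2 : μ • (Matrix.diagonal lam) = μ • (Matrix.diagonal lam * D) + σ • D := by
    subst hD
    rw [Matrix.diagonal_mul_diagonal]
    ext i j
    rcases eq_or_ne i j with rfl | h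
    · simp only [Matrix.add_apply, Matrix.smul_apply, Matrix.diagonal_apply_eq, smul_eq_mul]
      have hne : μ * lam i + σ ≠ 0 := (hden i).ne'
      field_simp
    · simp [Matrix.diagonal_apply_ne _ h, h]
  have hVV : ∀ (X : Matrix (Fin k) (Fin N) ℝ), Vᵀ * (V * X) = X := fun X => by
    rw [← Matrix.mul_assoc, hV, Matrix.one_mul]
  set P : Matrix (Fin N) (Fin N) ℝ := V * Dhat * Vᵀ with hP
  have hPP : P * P = V * (Dhat * Dhat) * Vᵀ := by
    simp only [hP, Matrix.mul_assoc]
    rw [hVV]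
  have key1 : (1 - P) * (1 - P) = 1 - V * D * Vᵀ := by
    rw [mul_sub, sub_mul, sub_mul, Matrix.mul_one, Matrix.one_mul, hPP, ← hd1]
    simp only [Matrix.add_mul, Matrix.mul_add, Matrix.sub_mul, Matrix.mul_sub, hP, Matrix.mul_one]
    abel
  set M : Matrix (Fin N) (Fin N) ℝ :=
    μ • (V * Matrix.diagonal lam * Vᵀ) + σ • (1 : Matrix (Fin N) (Fin N) ℝ) with hM
  have hAB : (V * Matrix.diagonal lam * Vᵀ) * (V * D * Vᵀ)
      = V * (Matrix.diagonal lam * D) * Vᵀ := by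
    simp only [Matrix.mul_assoc]
    rw [hVV]
  have key2 : M * (1 - V * D * Vᵀ) = σ • (1 : Matrix (Fin N) (Fin N) ℝ) := by
    rw [hM, add_mul, mul_sub, mul_sub, Matrix.mul_one, Matrix.mul_one,
      Matrix.smul_mul, Matrix.smul_mul, hAB, Matrix.one_mul]
    have : μ • (V * Matrix.diagonal lam * Vᵀ)
        = μ • (V * (Matrix.diagonal lam * D) * Vᵀ) + σ • (V * D * Vᵀ) := by
      have := congrArg (fun X => V * X * Vᵀ) hd2
      simpa [Matrix.mul_smul, Matrix.smul_mul, Matrix.mul_add, Matrix.add_mul,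
        Matrix.mul_assoc] using this
    rw [this]
    abel
  -- transpose facts
  have hPt : Pᵀ = P := by
    rw [hP, hDhat]
    simp [Matrix.transpose_mul, Matrix.mul_assoc]
  have hLt : IsUnit Lᵀ.det := by rwa [Matrix.det_transpose]
  have hGt : Gᵀ = (σ ^ (-(1 : ℝ) / 2) : ℝ) • ((1 - P) * (Lᵀ)⁻¹) := by
    rw [hG]
    rw [Matrix.transpose_smul, Matrix.transpose_mul, Matrix.transpose_sub,
      Matrix.transpose_one, hPt, Matrix.transpose_nonsing_inv]
  have hc : (σ ^ (-(1 : ℝ) / 2) : ℝ) * (σ ^ (-(1 : ℝ) / 2) : ℝ) = σ⁻¹ := by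
    rw [← Real.rpow_add hσ]
    norm_num [Real.rpow_neg_one]
  have hGG : G * Gᵀ = σ⁻¹ • (L⁻¹ * ((1 - P) * (1 - P)) * (Lᵀ)⁻¹) := by
    rw [hGt, hG, Matrix.smul_mul, Matrix.mul_smul, smul_smul, hc]
    simp only [Matrix.mul_assoc]
  rw [hΓhat]
  symm
  apply Matrix.inv_eq_right_inv
  rw [hGG, key1, Matrix.mul_smul]
  rw [show Lᵀ * M * L * (L⁻¹ * (1 - V * D * Vᵀ) * (Lᵀ)⁻¹)
      = Lᵀ * (M * ((L * L⁻¹) * ((1 - V * D * Vᵀ) * (Lᵀ)⁻¹))) by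
    simp only [Matrix.mul_assoc]]
  rw [Matrix.mul_nonsing_inv L hL, Matrix.one_mul, ← Matrix.mul_assoc M, key2,
    Matrix.smul_mul, Matrix.mul_smul, Matrix.one_mul, smul_smul,
    inv_mul_cancel₀ hσne, one_smul, Matrix.mul_nonsing_inv _ hLt]
end
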